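/- arXiv:1508.04710 — 4 statements merged into one kernel-verified Lean document; each statement's English description precedes it below -/
import Mathlib

section
/- Let a be a real number, let r ≥ 1, b ≥ 0 and 1 ≤ ℓ ≤ r be integers, set ρ = 1 + (a/2)(r−1) + b, and let λ = (λ₁ ≥ … ≥ λ_ℓ ≥ 0, 0, …, 0) be a partition of length ≤ ℓ (viewed as a partition of length ≤ r) and k a natural number with k ≤ λ_ℓ. Let λ − k_ℓ denote the partition obtained by subtracting k from each of the first ℓ parts of λ. Then (ρ)_λ = (ρ)_{λ−k_ℓ} · ∏_{j=1}^{ℓ} (λ_j + (a/2)(r−j) + b)*_k, where (m)*_k is the falling Pochhammer symbol. -/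
/-!
Each factor splits as `(x)_m = (x)_{m-k} · (x+m-1)*_k` (reverse the last `k` factors of the
ascending product). For the `j`-th factor of `(ρ)_λ` one has `x = ρ - (a/2)(j-1)` and `m = λ_j`,
so `x + m - 1 = λ_j + (a/2)(r-j) + b`; the parts beyond `ℓ` are `0` and contribute nothing.
-/

open Finset

/-- The ascending Pochhammer symbol `(x)_n = x(x+1)⋯(x+n−1)`, with `(x)_0 = 1`. -/
noncomputable def poch (x : ℝ) (n : ℕ) : ℝ := ∏ i ∈ Finset.range n, (x + i)

/-- The falling Pochhammer symbol `(x)*_n = x(x−1)⋯(x−n+1)`, with `(x)*_0 = 1`. -/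
noncomputable def fall (x : ℝ) (n : ℕ) : ℝ := ∏ i ∈ Finset.range n, (x - i)

/-- The multi-variable Pochhammer symbol `(s)_λ = ∏_{i=1}^{r} (s − (a/2)(i−1))_{λ_i}`
(here the index `i` runs over `0, …, r−1`, so `(i−1)` becomes `i`). -/
noncomputable def pochMulti (a s : ℝ) (r : ℕ) (l : ℕ → ℕ) : ℝ :=
  ∏ i ∈ Finset.range r, poch (s - a / 2 * i) (l i)

lemma poch_add (x : ℝ) (m n : ℕ) : poch x (m + n) = poch x m * poch (x + m) n := by
  unfold poch
  rw [prod_range_add]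
  congr 1
  refine prod_congr rfl fun i _ => ?_
  push_cast
  ring

lemma poch_eq_fall (x : ℝ) (n : ℕ) : poch x n = fall (x + n - 1) n := by
  unfold poch fall
  rw [← prod_range_reflect]
  refine prod_congr rfl fun i hi => ?_
  rw [Nat.sub_sub, Nat.cast_sub (by have := mem_range.mp hi; omega)]
  push_cast
  ring

lemma poch_eq_mul_fall {n m : ℕ} (x : ℝ) (h : n ≤ m) :
    poch x m = poch x (m - n) * fall (x + m - 1) n := by
  calc poch x m = poch x (m - n + n) := by rw [Nat.sub_add_cancel h]
    _ = poch x (m - n) * poch (x + (m - n : ℕ)) n := poch_add x (m - n) n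
    _ = poch x (m - n) * fall (x + m - 1) n := by
      rw [poch_eq_fall (x + _), Nat.cast_sub h]
      ring_nf

lemma pochMulti_eq_mul_prod_fall (a s : ℝ) {r ℓ k : ℕ} (hℓr : ℓ ≤ r) (l : ℕ → ℕ)
    (hlen : ∀ i, ℓ ≤ i → l i = 0) (hk : ∀ i < ℓ, k ≤ l i) :
    pochMulti a s r l = pochMulti a s r (fun i => l i - k) *
      ∏ j ∈ range ℓ, fall (s - a / 2 * j + l j - 1) k := by
  unfold pochMulti
  rw [← prod_range_mul_prod_Ico _ hℓr, ← prod_range_mul_prod_Ico _ hℓr]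
  have tail : ∀ i ∈ Ico ℓ r, poch (s - a / 2 * i) (l i) = poch (s - a / 2 * i) (l i - k) := by
    intro i hi
    rw [hlen i (mem_Ico.mp hi).1, Nat.zero_sub]
  have head : ∀ i ∈ range ℓ, poch (s - a / 2 * i) (l i) =
      poch (s - a / 2 * i) (l i - k) * fall (s - a / 2 * i + l i - 1) k :=
    fun i hi => poch_eq_mul_fall _ (hk i (mem_range.mp hi))
  rw [prod_congr rfl tail, prod_congr rfl head, prod_mul_distrib]
  ring

theorem pochMulti_fall_general (a : ℝ) (r b ℓ : ℕ) (hℓr : ℓ ≤ r)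
    (l : ℕ → ℕ) (hl : Antitone l) (hlen : ∀ i, ℓ ≤ i → l i = 0)
    (k : ℕ) (hk : k ≤ l (ℓ - 1)) :
    pochMulti a (1 + a / 2 * ((r : ℝ) - 1) + b) r l =
    pochMulti a (1 + a / 2 * ((r : ℝ) - 1) + b) r (fun i => l i - k) *
      ∏ j ∈ Finset.range ℓ, fall ((l j : ℝ) + a / 2 * ((r : ℝ) - 1 - j) + b) k := by
  have hk_of_lt : ∀ i < ℓ, k ≤ l i := fun i hi => hk.trans (hl (by omega))
  rw [pochMulti_eq_mul_prod_fall a _ hℓr l hlen hk_of_lt]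
  congr 1
  refine prod_congr rfl fun j _ => ?_
  ring_nf

/-- For `ρ = 1 + (a/2)(r−1) + b`, a partition `λ` of length `≤ ℓ ≤ r` and `k ≤ λ_ℓ`:
`(ρ)_λ = (ρ)_{λ−k_ℓ} · ∏_{j=1}^{ℓ} (λ_j + (a/2)(r−j) + b)*_k`, where `λ − k_ℓ`
subtracts `k` from each of the first `ℓ` parts of `λ`. -/
theorem pochMulti_fall (a : ℝ) (r b ℓ : ℕ) (hℓ1 : 1 ≤ ℓ) (hℓr : ℓ ≤ r)
    (l : ℕ → ℕ) (hl : Antitone l) (hlen : ∀ i, ℓ ≤ i → l i = 0)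
    (k : ℕ) (hk : k ≤ l (ℓ - 1)) :
    pochMulti a (1 + a / 2 * ((r : ℝ) - 1) + b) r l =
    pochMulti a (1 + a / 2 * ((r : ℝ) - 1) + b) r (fun i => l i - k) *
      ∏ j ∈ Finset.range ℓ, fall ((l j : ℝ) + a / 2 * ((r : ℝ) - 1 - j) + b) k :=
  pochMulti_fall_general a r b ℓ hℓr l hl hlen k hk
end

section
/- Let n > 1 be a real number, c > 0, and let d : ℕ → ℕ be a sequence of positive integers with d_m/m^{n−1} → c as m → ∞. Define N(M) = Σ_{m=0}^{M} d_m (with N(−1) = 0), and let σ : {1,2,3,…} → ℝ be the nonincreasing sequence defined by σ_j = 1/(m+1) whenever N(m−1) < j ≤ N(m). Then there exists a constant C > 0 such that Σ_{i=1}^{j} σ_i ≤ C · j^{1−1/n} for all j ≥ 1. -/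
open Finset Filter

/-! Cut the sum at the end of the `M`-th block. Since `d_k = O(k^{n-1})`, the head is
`∑_{k<M} d_k/(k+1) = O(∑_{k<M} (k+1)^{n-2}) = O(M^{n-1})`, while each of the at most `j`
remaining terms is at most `1/(M+1)`. Balancing the two with `M ≈ j^{1/n}` gives
`O(j^{1-1/n})`. -/

lemma min_one_mul_rpow_sub_one_le {p x : ℝ} (hp : 0 < p) (hx : 0 ≤ x) :
    min 1 p * (x + 1) ^ (p - 1) ≤ (x + 1) ^ p - x ^ p := by
  have hx1 : 0 < x + 1 := by linarith
  have hsplit : (x + 1) ^ p = (x + 1) ^ (p - 1) * (x + 1) := by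
    rw [← Real.rpow_add_one hx1.ne', sub_add_cancel]
  rcases le_total 1 p with hp1 | hp1
  · have hxp : x ^ p ≤ (x + 1) ^ (p - 1) * x :=
      calc x ^ p = x ^ (p - 1) * x := by
            rw [← Real.rpow_add_one' hx (by linarith), sub_add_cancel]
        _ ≤ (x + 1) ^ (p - 1) * x := by gcongr; linarith
    rw [min_eq_left hp1, hsplit]
    linarith
  · have hamgm := Real.geom_mean_le_arith_mean2_weighted hp.le (by linarith) hx hx1.le
      (add_sub_cancel p 1)
    have hxp : x ^ p ≤ (x + 1 - p) * (x + 1) ^ (p - 1) :=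
      calc x ^ p = x ^ p * (x + 1) ^ (1 - p) * (x + 1) ^ (p - 1) := by
            rw [mul_assoc, ← Real.rpow_add hx1]; simp
        _ ≤ (p * x + (1 - p) * (x + 1)) * (x + 1) ^ (p - 1) := by gcongr
        _ = (x + 1 - p) * (x + 1) ^ (p - 1) := by ring
    rw [min_eq_right hp1, hsplit]
    linarith

lemma min_one_mul_sum_range_rpow_sub_one_le {p : ℝ} (hp : 0 < p) (m : ℕ) :
    min 1 p * ∑ k ∈ range m, ((k : ℝ) + 1) ^ (p - 1) ≤ (m : ℝ) ^ p :=
  calc min 1 p * ∑ k ∈ range m, ((k : ℝ) + 1) ^ (p - 1)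
      ≤ ∑ k ∈ range m, (((k + 1 : ℕ) : ℝ) ^ p - (k : ℝ) ^ p) := by
        rw [mul_sum]
        gcongr with k
        push_cast
        exact min_one_mul_rpow_sub_one_le hp k.cast_nonneg
    _ = (m : ℝ) ^ p := by
        rw [sum_range_sub (fun k : ℕ => (k : ℝ) ^ p)]
        simp [Real.zero_rpow hp.ne']

lemma sum_range_div_add_one_le {f : ℕ → ℝ} {A p : ℝ} (hp : 0 < p) (hA : 0 ≤ A)
    (hf : ∀ k, f k ≤ A * ((k : ℝ) + 1) ^ p) (m : ℕ) :
    ∑ k ∈ range m, f k / ((k : ℝ) + 1) ≤ A / min 1 p * (m : ℝ) ^ p := by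
  have hmin : 0 < min 1 p := lt_min one_pos hp
  calc ∑ k ∈ range m, f k / ((k : ℝ) + 1)
      ≤ ∑ k ∈ range m, A * ((k : ℝ) + 1) ^ (p - 1) := by
        gcongr with k
        rw [Real.rpow_sub_one (by positivity), mul_div_assoc']
        gcongr
        exact hf k
    _ = A / min 1 p * (min 1 p * ∑ k ∈ range m, ((k : ℝ) + 1) ^ (p - 1)) := by
        rw [← mul_assoc, div_mul_cancel₀ _ hmin.ne', mul_sum]
    _ ≤ A / min 1 p * (m : ℝ) ^ p := by
        gcongr
        exact min_one_mul_sum_range_rpow_sub_one_le hp m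

lemma exists_le_mul_add_one_rpow {f : ℕ → ℝ} {p : ℝ} (hp : 0 ≤ p)
    (hf : BddAbove (Set.range fun k : ℕ => f k / (k : ℝ) ^ p)) :
    ∃ A, 0 ≤ A ∧ ∀ k, f k ≤ A * ((k : ℝ) + 1) ^ p := by
  obtain ⟨B, hB⟩ := hf
  have hA : 0 ≤ max B |f 0| := (abs_nonneg _).trans (le_max_right _ _)
  refine ⟨max B |f 0|, hA, fun k => ?_⟩
  rcases k.eq_zero_or_pos with rfl | hk
  · simpa using (le_abs_self (f 0)).trans (le_max_right B _)
  · have hkp : 0 < (k : ℝ) ^ p := by positivity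
    calc f k = f k / (k : ℝ) ^ p * (k : ℝ) ^ p := (div_mul_cancel₀ _ hkp.ne').symm
      _ ≤ max B |f 0| * ((k : ℝ) + 1) ^ p :=
        mul_le_mul ((hB ⟨k, rfl⟩).trans (le_max_left _ _)) (by gcongr; linarith) hkp.le hA

lemma exists_nat_div_add_one_le_rpow_and_rpow_le {x n : ℝ} (hx : 1 ≤ x) (hn : 1 ≤ n) :
    ∃ M : ℕ, x / ((M : ℝ) + 1) ≤ x ^ (1 - 1 / n) ∧
      (M : ℝ) ^ (n - 1) ≤ 2 ^ (n - 1) * x ^ (1 - 1 / n) := by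
  have hx0 : 0 < x := by linarith
  have hy : 1 ≤ x ^ (1 / n) := Real.one_le_rpow hx (by positivity)
  have hxy : x ^ (1 - 1 / n) * x ^ (1 / n) = x := by
    rw [← Real.rpow_add hx0, sub_add_cancel, Real.rpow_one]
  refine ⟨⌈x ^ (1 / n)⌉₊, ?_, ?_⟩
  · rw [div_le_iff₀ (by positivity)]
    calc x = x ^ (1 - 1 / n) * x ^ (1 / n) := hxy.symm
      _ ≤ x ^ (1 - 1 / n) * (⌈x ^ (1 / n)⌉₊ + 1) := by
        gcongr
        linarith [Nat.le_ceil (x ^ (1 / n))]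
  · calc (⌈x ^ (1 / n)⌉₊ : ℝ) ^ (n - 1) ≤ (2 * x ^ (1 / n)) ^ (n - 1) := by
          gcongr
          linarith [Nat.ceil_lt_add_one (zero_le_one.trans hy)]
      _ = 2 ^ (n - 1) * x ^ (1 - 1 / n) := by
          rw [Real.mul_rpow zero_le_two (by positivity), ← Real.rpow_mul hx0.le]
          congr 2
          field_simp

section Blocks

variable {d : ℕ → ℕ} {σ : ℕ → ℝ}

/- `∑ i ∈ range m, d i` is the paper's `N(m - 1)`. -/

lemma sum_Ioc_zero_sum_range_eq
    (hσ : ∀ m j : ℕ, ∑ i ∈ range m, d i < j →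
      j ≤ ∑ i ∈ range (m + 1), d i → σ j = 1 / ((m : ℝ) + 1)) (m : ℕ) :
    ∑ j ∈ Ioc 0 (∑ i ∈ range m, d i), σ j =
      ∑ k ∈ range m, (d k : ℝ) / ((k : ℝ) + 1) := by
  induction m with
  | zero => simp
  | succ m ih =>
    have hblock : ∑ j ∈ Ioc (∑ i ∈ range m, d i) (∑ i ∈ range (m + 1), d i), σ j
        = (d m : ℝ) / ((m : ℝ) + 1) := by
      rw [sum_congr rfl fun j hj => hσ m j (mem_Ioc.1 hj).1 (mem_Ioc.1 hj).2, sum_const,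
        Nat.card_Ioc, sum_range_succ, Nat.add_sub_cancel_left, nsmul_eq_mul, mul_one_div]
    have hmono : ∑ i ∈ range m, d i ≤ ∑ i ∈ range (m + 1), d i :=
      (sum_mono_set d).comp range_mono m.le_succ
    rw [← sum_Ioc_consecutive σ (Nat.zero_le _) hmono, ih, hblock, sum_range_succ]

lemma exists_le_eq_one_div_of_sum_range_lt (hd : ∀ m, 0 < d m)
    (hσ : ∀ m j : ℕ, ∑ i ∈ range m, d i < j →
      j ≤ ∑ i ∈ range (m + 1), d i → σ j = 1 / ((m : ℝ) + 1))
    {m j : ℕ} (hj : ∑ i ∈ range m, d i < j) :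
    ∃ k, m ≤ k ∧ σ j = 1 / ((k : ℝ) + 1) := by
  have hex : ∃ k, j ≤ ∑ i ∈ range k, d i :=
    ⟨j, by simpa using card_nsmul_le_sum (range j) d 1 fun i _ => hd i⟩
  have hmK : m < Nat.find hex := by
    by_contra! h
    exact hj.not_ge ((Nat.find_spec hex).trans ((sum_mono_set d).comp range_mono h))
  obtain ⟨k, hk⟩ := Nat.exists_eq_add_of_lt hmK
  refine ⟨m + k, Nat.le_add_right m k, hσ _ _ ?_ ?_⟩
  · exact not_le.1 (Nat.find_min hex (by omega))
  · exact hk ▸ Nat.find_spec hex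

lemma sum_Icc_le_sum_range_add (hd : ∀ m, 0 < d m)
    (hσ : ∀ m j : ℕ, ∑ i ∈ range m, d i < j →
      j ≤ ∑ i ∈ range (m + 1), d i → σ j = 1 / ((m : ℝ) + 1)) (m j : ℕ) :
    ∑ i ∈ Icc 1 j, σ i ≤
      ∑ k ∈ range m, (d k : ℝ) / ((k : ℝ) + 1) + j / ((m : ℝ) + 1) := by
  set N := ∑ i ∈ range m, d i
  have hnonneg : ∀ i ∈ Ioc 0 (max j N), 0 ≤ σ i := by
    intro i hi
    obtain ⟨k, -, hk⟩ := exists_le_eq_one_div_of_sum_range_lt hd hσ (m := 0)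
      (by simpa using (mem_Ioc.1 hi).1)
    rw [hk]
    positivity
  have htail : ∀ i ∈ Ioc N (max j N), σ i ≤ 1 / ((m : ℝ) + 1) := by
    intro i hi
    obtain ⟨k, hmk, hk⟩ := exists_le_eq_one_div_of_sum_range_lt hd hσ (mem_Ioc.1 hi).1
    rw [hk]
    gcongr
  rw [show Icc 1 j = Ioc 0 j from Icc_add_one_left_eq_Ioc 0 j]
  calc ∑ i ∈ Ioc 0 j, σ i ≤ ∑ i ∈ Ioc 0 (max j N), σ i :=
        sum_le_sum_of_subset_of_nonneg (Ioc_subset_Ioc_right (le_max_left _ _))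
          fun i hi _ => hnonneg i hi
    _ = ∑ i ∈ Ioc 0 N, σ i + ∑ i ∈ Ioc N (max j N), σ i :=
        (sum_Ioc_consecutive _ (Nat.zero_le _) (le_max_right _ _)).symm
    _ ≤ ∑ k ∈ range m, (d k : ℝ) / ((k : ℝ) + 1) +
          ((max j N - N : ℕ) : ℝ) * (1 / ((m : ℝ) + 1)) := by
        rw [sum_Ioc_zero_sum_range_eq hσ]
        gcongr
        simpa using sum_le_card_nsmul _ _ _ htail
    _ ≤ ∑ k ∈ range m, (d k : ℝ) / ((k : ℝ) + 1) + j / ((m : ℝ) + 1) := by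
        rw [mul_one_div]
        gcongr
        omega

end Blocks

theorem partial_sums_singular_values_general (n : ℝ) (hn : 1 < n) (c : ℝ)
    (d : ℕ → ℕ) (hd : ∀ m, 0 < d m)
    (hlim : Tendsto (fun m : ℕ => (d m : ℝ) / (m : ℝ) ^ (n - 1)) atTop (nhds c))
    (σ : ℕ → ℝ)
    (hσ : ∀ m j : ℕ, (∑ i ∈ Finset.range m, d i) < j →
      j ≤ (∑ i ∈ Finset.range (m + 1), d i) → σ j = 1 / ((m : ℝ) + 1)) :
    ∃ C : ℝ, 0 < C ∧ ∀ j : ℕ, 1 ≤ j →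
      (∑ i ∈ Finset.Icc 1 j, σ i) ≤ C * (j : ℝ) ^ (1 - 1 / n) := by
  have hp : 0 < n - 1 := sub_pos.2 hn
  obtain ⟨A, hA0, hA⟩ :=
    exists_le_mul_add_one_rpow (f := fun k => (d k : ℝ)) hp.le hlim.bddAbove_range
  have hC : 0 ≤ A / min 1 (n - 1) := div_nonneg hA0 (le_min zero_le_one hp.le)
  refine ⟨A / min 1 (n - 1) * 2 ^ (n - 1) + 1, by positivity, fun j hj => ?_⟩
  obtain ⟨M, htail, hhead⟩ :=
    exists_nat_div_add_one_le_rpow_and_rpow_le (x := j) (by exact_mod_cast hj) hn.le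
  calc ∑ i ∈ Icc 1 j, σ i
      ≤ ∑ k ∈ range M, (d k : ℝ) / ((k : ℝ) + 1) + j / ((M : ℝ) + 1) :=
        sum_Icc_le_sum_range_add hd hσ M j
    _ ≤ A / min 1 (n - 1) * (M : ℝ) ^ (n - 1) + (j : ℝ) ^ (1 - 1 / n) :=
        add_le_add (sum_range_div_add_one_le hp hA0 hA M) htail
    _ ≤ A / min 1 (n - 1) * (2 ^ (n - 1) * (j : ℝ) ^ (1 - 1 / n)) +
          (j : ℝ) ^ (1 - 1 / n) := by
        gcongr
    _ = (A / min 1 (n - 1) * 2 ^ (n - 1) + 1) * (j : ℝ) ^ (1 - 1 / n) := by ring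

/-- Let `d_m` be positive integer multiplicities with `d_m/m^{n−1} → c > 0` for some `n > 1`,
and let `σ` be the nonincreasing sequence listing the value `1/(m+1)` with multiplicity `d_m`,
i.e. `σ_j = 1/(m+1)` whenever `N(m−1) < j ≤ N(m)` where `N(m) = d_0 + ⋯ + d_m`.
Then the partial sums `σ_1 + ⋯ + σ_j` are `O(j^{1−1/n})`. -/
theorem partial_sums_singular_values (n : ℝ) (hn : 1 < n) (c : ℝ) (hc : 0 < c)
    (d : ℕ → ℕ) (hd : ∀ m, 0 < d m)
    (hlim : Tendsto (fun m : ℕ => (d m : ℝ) / (m : ℝ) ^ (n - 1)) atTop (nhds c))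
    (σ : ℕ → ℝ)
    (hσ : ∀ m j : ℕ, (∑ i ∈ Finset.range m, d i) < j →
      j ≤ (∑ i ∈ Finset.range (m + 1), d i) → σ j = 1 / ((m : ℝ) + 1)) :
    ∃ C : ℝ, 0 < C ∧ ∀ j : ℕ, 1 ≤ j →
      (∑ i ∈ Finset.Icc 1 j, σ i) ≤ C * (j : ℝ) ^ (1 - 1 / n) :=
  partial_sums_singular_values_general n hn c d hd hlim σ hσ
end

section
/- Let H be a complex Hilbert space which is the internal Hilbert direct sum of a family (Q_j)_{j∈ℕ} of pairwise orthogonal closed subspaces, with orthogonal projections P_j : H → H onto Q_j. Let T : H → H be a bounded linear operator with finite propagation, i.e. there exists l ∈ ℕ such that P_i T P_j = 0 whenever |i − j| > l. Suppose there is a constant C such that j²·‖T x‖ ≤ C·‖x‖ for every j ∈ ℕ and every x ∈ Q_j (i.e. TΛ² is bounded, where Λ is the diagonal operator with Λx = jx for x ∈ Q_j). Then: (i) there is a constant C′ such that Σ_{i∈ℕ} i⁴·‖P_i T x‖² ≤ C′²·‖x‖² for every x ∈ H (i.e. Λ²T is bounded), and (ii) there is a constant C″ such that j²·‖T* x‖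 ≤ C″·‖x‖ for every j ∈ ℕ and every x ∈ Q_j (i.e. T*Λ² is bounded). -/
/-!
Put `K = 2 (C + l² ‖T‖)`. The block `P_i T P_j` vanishes unless `|i - j| ≤ l`, and then
`i² ≤ (j + l)² ≤ 2 (j² + l²)`, so the bound on `TΛ²` together with `‖T‖` gives
`i² ‖P_i T P_j‖ ≤ K`. Thus `Λ²T` is a band matrix of width `2l + 1` with blocks bounded by `K`,
and so is `T*Λ²`, whose blocks `(j² P_j T P_i)*` have the same norms. A band matrix with
uniformly bounded blocks is bounded: apply Cauchy–Schwarz along each row, use that each column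
meets at most `2l + 1` rows, and `∑ ‖P_j x‖² = ‖x‖²`.
-/

open Finset ContinuousLinearMap
open scoped InnerProductSpace

theorem IsIdempotentElem.apply_apply {R M : Type*} [Semiring R] [AddCommMonoid M]
    [TopologicalSpace M] [Module R M] {p : M →L[R] M} (hp : IsIdempotentElem p) (x : M) :
    p (p x) = p x :=
  congr($hp.eq x)

section

variable {𝕜 H : Type*} [RCLike 𝕜] [NormedAddCommGroup H] [InnerProductSpace 𝕜 H]

namespace IsStarProjection

variable [CompleteSpace H] {p : H →L[𝕜] H}

theorem inner_apply_eq_norm_sq (hp : IsStarProjection p) (x : H) :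
    ⟪x, p x⟫_𝕜 = (‖p x‖ : 𝕜) ^ 2 := by
  calc ⟪x, p x⟫_𝕜 = ⟪x, p (p x)⟫_𝕜 := by rw [hp.isIdempotentElem.apply_apply]
    _ = ⟪adjoint p x, p x⟫_𝕜 := (adjoint_inner_left p (p x) x).symm
    _ = (‖p x‖ : 𝕜) ^ 2 := by rw [hp.isSelfAdjoint.adjoint_eq, inner_self_eq_norm_sq_to_K]

theorem norm_apply_le (hp : IsStarProjection p) (x : H) : ‖p x‖ ≤ ‖x‖ := by
  simpa using p.le_of_opNorm_le (IsStarProjection.norm_le p hp) x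

end IsStarProjection

theorem hasSum_norm_apply_sq [CompleteSpace H] {ι : Type*} {P : ι → H →L[𝕜] H}
    (hP : ∀ j, IsStarProjection (P j)) {x : H} (hx : HasSum (fun j => P j x) x) :
    HasSum (fun j => ‖P j x‖ ^ 2) (‖x‖ ^ 2) := by
  have h := (innerSL 𝕜 x).hasSum hx
  simp only [innerSL_apply_apply, (hP _).inner_apply_eq_norm_sq, inner_self_eq_norm_sq_to_K] at h
  exact_mod_cast h

def band (l i : ℕ) : Finset ℕ := Icc (i - l) (i + l)

theorem mem_band {l i j : ℕ} : j ∈ band l i ↔ i ≤ j + l ∧ j ≤ i + l := by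
  simp only [band, mem_Icc]
  omega

theorem mem_band_comm {l i j : ℕ} : j ∈ band l i ↔ i ∈ band l j := by
  simp only [mem_band]
  omega

theorem notMem_band_iff {l i j : ℕ} : j ∉ band l i ↔ (l : ℤ) < |(i : ℤ) - (j : ℤ)| := by
  rw [mem_band, lt_abs]
  omega

theorem card_band_le (l i : ℕ) : #(band l i) ≤ 2 * l + 1 := by
  simp only [band, Nat.card_Icc]
  omega

theorem sum_sum_band_le {a : ℕ → ℝ} (ha : ∀ j, 0 ≤ a j) (l : ℕ) (F : Finset ℕ) :
    ∑ i ∈ F, ∑ j ∈ band l i, a j ≤ (2 * l + 1) * ∑ j ∈ F.biUnion (band l), a j := by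
  rw [sum_comm' (t' := F.biUnion (band l)) (s' := fun j => F.filter (j ∈ band l ·))
    (fun i j => by simp only [mem_filter, mem_biUnion]; exact ⟨fun h => ⟨h, i, h⟩, And.left⟩),
    mul_sum]
  refine sum_le_sum fun j _ => ?_
  rw [sum_const, nsmul_eq_mul]
  have hcard : #(F.filter (j ∈ band l ·)) ≤ 2 * l + 1 :=
    (card_le_card fun i hi => mem_band_comm.1 (mem_filter.1 hi).2).trans (card_band_le l j)
  gcongr
  · exact ha j
  · exact_mod_cast hcard

/-- A Schur test for band matrices. -/
theorem tsum_sq_le_of_le_sum_band {a b : ℕ → ℝ} {K : ℝ} (l : ℕ) (hb0 : ∀ i, 0 ≤ b i)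
    (hb : ∀ i, b i ≤ K * ∑ j ∈ band l i, a j) (ha : Summable fun j => a j ^ 2) :
    ∑' i, b i ^ 2 ≤ ((2 * l + 1) * K) ^ 2 * ∑' j, a j ^ 2 := by
  have hrow (i : ℕ) : b i ^ 2 ≤ (2 * l + 1) * K ^ 2 * ∑ j ∈ band l i, a j ^ 2 :=
    calc b i ^ 2 ≤ (K * ∑ j ∈ band l i, a j) ^ 2 := pow_le_pow_left₀ (hb0 i) (hb i) 2
      _ ≤ K ^ 2 * (#(band l i) * ∑ j ∈ band l i, a j ^ 2) := by
        rw [mul_pow]; gcongr; exact sq_sum_le_card_mul_sum_sq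
      _ ≤ K ^ 2 * ((2 * l + 1) * ∑ j ∈ band l i, a j ^ 2) := by
        gcongr
        exact_mod_cast card_band_le l i
      _ = (2 * l + 1) * K ^ 2 * ∑ j ∈ band l i, a j ^ 2 := by ring
  refine tsum_le_of_sum_le' (by positivity) fun F => ?_
  calc ∑ i ∈ F, b i ^ 2 ≤ ∑ i ∈ F, (2 * l + 1) * K ^ 2 * ∑ j ∈ band l i, a j ^ 2 :=
        sum_le_sum fun i _ => hrow i
    _ = (2 * l + 1) * K ^ 2 * ∑ i ∈ F, ∑ j ∈ band l i, a j ^ 2 := (mul_sum _ _ _).symm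
    _ ≤ (2 * l + 1) * K ^ 2 * ((2 * l + 1) * ∑' j, a j ^ 2) := by
        gcongr
        exact (sum_sum_band_le (fun j => sq_nonneg (a j)) l F).trans <| by
          gcongr; exact ha.sum_le_tsum _ fun j _ => sq_nonneg (a j)
    _ = ((2 * l + 1) * K) ^ 2 * ∑' j, a j ^ 2 := by ring

theorem sq_mul_norm_apply_le_of_le_add {E F : Type*} [SeminormedAddCommGroup E]
    [SeminormedAddCommGroup F] [NormedSpace 𝕜 E] [NormedSpace 𝕜 F] (T : E →L[𝕜] F)
    {i j l : ℕ} {C : ℝ} {x : E} (hj : (j : ℝ) ^ 2 * ‖T x‖ ≤ C * ‖x‖) (hij : i ≤ j + l) :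
    (i : ℝ) ^ 2 * ‖T x‖ ≤ 2 * (C + l ^ 2 * ‖T‖) * ‖x‖ := by
  have hi : (i : ℝ) ^ 2 ≤ 2 * ((j : ℝ) ^ 2 + (l : ℝ) ^ 2) := by
    have : (i : ℝ) ≤ j + l := by exact_mod_cast hij
    nlinarith [sq_nonneg ((j : ℝ) - l), Nat.cast_nonneg (α := ℝ) i]
  calc (i : ℝ) ^ 2 * ‖T x‖ ≤ 2 * ((j : ℝ) ^ 2 + l ^ 2) * ‖T x‖ := by gcongr
    _ = 2 * ((j : ℝ) ^ 2 * ‖T x‖ + l ^ 2 * ‖T x‖) := by ring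
    _ ≤ 2 * (C * ‖x‖ + l ^ 2 * (‖T‖ * ‖x‖)) := by gcongr; exact T.le_opNorm x
    _ = 2 * (C + l ^ 2 * ‖T‖) * ‖x‖ := by ring

theorem adjoint_comp_comp_of_isSelfAdjoint [CompleteSpace H] {p q : H →L[𝕜] H}
    (hp : IsSelfAdjoint p) (hq : IsSelfAdjoint q) (T : H →L[𝕜] H) :
    adjoint ((q ∘L T) ∘L p) = (p ∘L adjoint T) ∘L q := by
  rw [adjoint_comp, adjoint_comp, hp.adjoint_eq, hq.adjoint_eq, comp_assoc]

def HasFinitePropagation (P : ℕ → H →L[𝕜] H) (T : H →L[𝕜] H) (l : ℕ) : Prop :=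
  ∀ i j : ℕ, (l : ℤ) < |(i : ℤ) - (j : ℤ)| → ((P i).comp T).comp (P j) = 0

namespace HasFinitePropagation

variable {P : ℕ → H →L[𝕜] H} {T : H →L[𝕜] H} {l : ℕ}

theorem apply_eq_zero (hT : HasFinitePropagation P T l) {i j : ℕ} (hj : j ∉ band l i) (x : H) :
    P i (T (P j x)) = 0 :=
  congr($(hT i j (notMem_band_iff.1 hj)) x)

theorem apply_eq_sum_band (hT : HasFinitePropagation P T l) {x : H}
    (hx : HasSum (fun j => P j x) x) (i : ℕ) :
    P i (T x) = ∑ j ∈ band l i, P i (T (P j x)) :=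
  ((P i ∘L T).hasSum hx).unique <|
    hasSum_sum_of_ne_finset_zero fun _ hj => hT.apply_eq_zero hj x

theorem apply_eq_sum_band_of_apply_eq (hT : HasFinitePropagation P T l) {x : H} {j : ℕ}
    (hTx : HasSum (fun i => P i (T x)) (T x)) (hx : P j x = x) :
    T x = ∑ i ∈ band l j, P i (T x) :=
  hTx.unique <| hasSum_sum_of_ne_finset_zero fun _ hi => by
    rw [← hx]; exact hT.apply_eq_zero (mt mem_band_comm.1 hi) x

theorem adjoint [CompleteSpace H] (hT : HasFinitePropagation P T l)
    (hP : ∀ j, IsSelfAdjoint (P j)) : HasFinitePropagation P (adjoint T) l := fun i j hij => by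
  rw [← adjoint_comp_comp_of_isSelfAdjoint (hP i) (hP j), hT j i (by rwa [abs_sub_comm]), map_zero]

end HasFinitePropagation

section Bounds

variable [CompleteSpace H] {P : ℕ → H →L[𝕜] H} {T : H →L[𝕜] H} {l : ℕ} {C : ℝ}

theorem sq_mul_norm_comp_le (hP : ∀ j, IsStarProjection (P j)) (hC : 0 ≤ C)
    (hTΛ : ∀ j : ℕ, ∀ x : H, P j x = x → (j : ℝ) ^ 2 * ‖T x‖ ≤ C * ‖x‖) {i j : ℕ}
    (hji : j ≤ i + l) : (j : ℝ) ^ 2 * ‖(P j ∘L T) ∘L P i‖ ≤ 2 * (C + l ^ 2 * ‖T‖) := by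
  have hbound : ‖((j : 𝕜) ^ 2) • ((P j ∘L T) ∘L P i)‖ ≤ 2 * (C + l ^ 2 * ‖T‖) := by
    refine opNorm_le_bound _ (by positivity) fun y => ?_
    calc ‖((j : 𝕜) ^ 2 • ((P j ∘L T) ∘L P i)) y‖ = (j : ℝ) ^ 2 * ‖P j (T (P i y))‖ := by
          simp [norm_smul]
      _ ≤ (j : ℝ) ^ 2 * ‖T (P i y)‖ := by gcongr; exact (hP j).norm_apply_le _
      _ ≤ 2 * (C + l ^ 2 * ‖T‖) * ‖P i y‖ :=
          sq_mul_norm_apply_le_of_le_add T (hTΛ i _ ((hP i).isIdempotentElem.apply_apply y)) hji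
      _ ≤ 2 * (C + l ^ 2 * ‖T‖) * ‖y‖ := by gcongr; exact (hP i).norm_apply_le y
  simpa [norm_smul] using hbound

theorem tsum_sq_mul_norm_sq_le (hP : ∀ j, IsStarProjection (P j))
    (hsum : ∀ x : H, HasSum (fun j => P j x) x) (hT : HasFinitePropagation P T l)
    (hTΛ : ∀ j : ℕ, ∀ x : H, P j x = x → (j : ℝ) ^ 2 * ‖T x‖ ≤ C * ‖x‖) (x : H) :
    ∑' i : ℕ, (i : ℝ) ^ 4 * ‖P i (T x)‖ ^ 2
      ≤ ((2 * l + 1) * (2 * (C + l ^ 2 * ‖T‖))) ^ 2 * ‖x‖ ^ 2 := by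
  have hrow (i : ℕ) :
      (i : ℝ) ^ 2 * ‖P i (T x)‖ ≤ 2 * (C + l ^ 2 * ‖T‖) * ∑ j ∈ band l i, ‖P j x‖ := by
    rw [hT.apply_eq_sum_band (hsum x) i, mul_sum]
    calc (i : ℝ) ^ 2 * ‖∑ j ∈ band l i, P i (T (P j x))‖
        ≤ (i : ℝ) ^ 2 * ∑ j ∈ band l i, ‖T (P j x)‖ := by
          gcongr
          exact (norm_sum_le _ _).trans (sum_le_sum fun j _ => (hP i).norm_apply_le _)
      _ ≤ ∑ j ∈ band l i, 2 * (C + l ^ 2 * ‖T‖) * ‖P j x‖ := by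
          rw [mul_sum]
          exact sum_le_sum fun j hj => sq_mul_norm_apply_le_of_le_add T
            (hTΛ j _ ((hP j).isIdempotentElem.apply_apply x)) (mem_band.1 hj).1
  have hparseval := hasSum_norm_apply_sq hP (hsum x)
  have := tsum_sq_le_of_le_sum_band l (fun i => by positivity) hrow hparseval.summable
  rw [hparseval.tsum_eq] at this
  simpa only [mul_pow, ← pow_mul] using this

theorem sq_mul_norm_adjoint_apply_le (hP : ∀ j, IsStarProjection (P j))
    (hsum : ∀ x : H, HasSum (fun j => P j x) x) (hT : HasFinitePropagation P T l) (hC : 0 ≤ C)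
    (hTΛ : ∀ j : ℕ, ∀ x : H, P j x = x → (j : ℝ) ^ 2 * ‖T x‖ ≤ C * ‖x‖) {j : ℕ} {x : H}
    (hx : P j x = x) :
    (j : ℝ) ^ 2 * ‖adjoint T x‖ ≤ (2 * l + 1) * (2 * (C + l ^ 2 * ‖T‖)) * ‖x‖ := by
  have hterm (i : ℕ) (hi : i ∈ band l j) :
      (j : ℝ) ^ 2 * ‖P i (adjoint T x)‖ ≤ 2 * (C + l ^ 2 * ‖T‖) * ‖x‖ := by
    have hblock : P i (adjoint T x) = adjoint ((P j ∘L T) ∘L P i) x := by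
      rw [adjoint_comp_comp_of_isSelfAdjoint (hP i).isSelfAdjoint (hP j).isSelfAdjoint,
        comp_apply, comp_apply, hx]
    calc (j : ℝ) ^ 2 * ‖P i (adjoint T x)‖ ≤ (j : ℝ) ^ 2 * ‖(P j ∘L T) ∘L P i‖ * ‖x‖ := by
          rw [hblock, mul_assoc, ← LinearIsometryEquiv.norm_map adjoint ((P j ∘L T) ∘L P i)]
          gcongr
          exact le_opNorm _ x
      _ ≤ 2 * (C + l ^ 2 * ‖T‖) * ‖x‖ :=
          mul_le_mul_of_nonneg_right (sq_mul_norm_comp_le hP hC hTΛ (mem_band.1 hi).1)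
            (norm_nonneg x)
  rw [(hT.adjoint fun i => (hP i).isSelfAdjoint).apply_eq_sum_band_of_apply_eq (hsum _) hx]
  calc (j : ℝ) ^ 2 * ‖∑ i ∈ band l j, P i (adjoint T x)‖
      ≤ ∑ i ∈ band l j, (j : ℝ) ^ 2 * ‖P i (adjoint T x)‖ := by
        rw [← mul_sum]; gcongr; exact norm_sum_le _ _
    _ ≤ ∑ i ∈ band l j, 2 * (C + l ^ 2 * ‖T‖) * ‖x‖ := sum_le_sum hterm
    _ ≤ (2 * l + 1) * (2 * (C + l ^ 2 * ‖T‖)) * ‖x‖ := by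
        rw [sum_const, nsmul_eq_mul, ← mul_assoc]
        gcongr
        exact_mod_cast card_band_le l j

end Bounds

end

theorem finite_propagation_bounded_general
    (H : Type*) [NormedAddCommGroup H] [InnerProductSpace ℂ H] [CompleteSpace H]
    (P : ℕ → H →L[ℂ] H)
    (hproj : ∀ j, IsIdempotentElem (P j))
    (hsa : ∀ j, ContinuousLinearMap.adjoint (P j) = P j)
    (hsum : ∀ x : H, HasSum (fun j => P j x) x)
    (T : H →L[ℂ] H) (l : ℕ)
    (hfp : ∀ i j : ℕ, (l : ℤ) < |(i : ℤ) - (j : ℤ)| → ((P i).comp T).comp (P j) = 0)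
    (C : ℝ)
    (hTΛ : ∀ j : ℕ, ∀ x : H, P j x = x → (j : ℝ) ^ 2 * ‖T x‖ ≤ C * ‖x‖) :
    (∃ C' : ℝ, ∀ x : H,
        (∑' i : ℕ, (i : ℝ) ^ 4 * ‖P i (T x)‖ ^ 2) ≤ C' ^ 2 * ‖x‖ ^ 2) ∧
    (∃ C'' : ℝ, ∀ j : ℕ, ∀ x : H, P j x = x →
        (j : ℝ) ^ 2 * ‖ContinuousLinearMap.adjoint T x‖ ≤ C'' * ‖x‖) := by
  have hP (j : ℕ) : IsStarProjection (P j) := ⟨hproj j, isSelfAdjoint_iff'.2 (hsa j)⟩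
  have hTΛ₀ (j : ℕ) (x : H) (hx : P j x = x) : (j : ℝ) ^ 2 * ‖T x‖ ≤ max C 0 * ‖x‖ :=
    (hTΛ j x hx).trans (by gcongr; exact le_max_left C 0)
  exact ⟨⟨_, tsum_sq_mul_norm_sq_le hP hsum hfp hTΛ⟩,
    ⟨_, fun j x hx => sq_mul_norm_adjoint_apply_le hP hsum hfp (le_max_right C 0) hTΛ₀ hx⟩⟩

/-- Let `H = ⊕_{j∈ℕ} Q_j` be an orthogonal decomposition of a complex Hilbert space,
given by mutually orthogonal self-adjoint idempotents `P j` summing to the identity.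
Let `T` be a bounded operator of finite propagation (`P i T P j = 0` for `|i−j| > l`)
such that `TΛ²` is bounded, i.e. `j²‖Tx‖ ≤ C‖x‖` for `x ∈ Q_j`. Then `Λ²T` is bounded,
i.e. `∑_i i⁴‖P_i T x‖² ≤ C′²‖x‖²`, and `T*Λ²` is bounded, i.e. `j²‖T*x‖ ≤ C″‖x‖`
for `x ∈ Q_j`. -/
theorem finite_propagation_bounded
    (H : Type*) [NormedAddCommGroup H] [InnerProductSpace ℂ H] [CompleteSpace H]
    (P : ℕ → H →L[ℂ] H)
    (hproj : ∀ j, IsIdempotentElem (P j))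
    (hsa : ∀ j, ContinuousLinearMap.adjoint (P j) = P j)
    (horth : ∀ i j, i ≠ j → (P i).comp (P j) = 0)
    (hsum : ∀ x : H, HasSum (fun j => P j x) x)
    (T : H →L[ℂ] H) (l : ℕ)
    (hfp : ∀ i j : ℕ, (l : ℤ) < |(i : ℤ) - (j : ℤ)| → ((P i).comp T).comp (P j) = 0)
    (C : ℝ)
    (hTΛ : ∀ j : ℕ, ∀ x : H, P j x = x → (j : ℝ) ^ 2 * ‖T x‖ ≤ C * ‖x‖) :
    (∃ C' : ℝ, ∀ x : H,
        (∑' i : ℕ, (i : ℝ) ^ 4 * ‖P i (T x)‖ ^ 2) ≤ C' ^ 2 * ‖x‖ ^ 2) ∧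
    (∃ C'' : ℝ, ∀ j : ℕ, ∀ x : H, P j x = x →
        (j : ℝ) ^ 2 * ‖ContinuousLinearMap.adjoint T x‖ ≤ C'' * ‖x‖) :=
  finite_propagation_bounded_general H P hproj hsa hsum T l hfp C hTΛ
end

section
/- Let R be a (not necessarily commutative) ring and let I, J be two-sided ideals of R such that x·y ∈ J for all x, y ∈ I. Let A₁, A₂, A₃, A₄ and Ã₁, Ã₂, Ã₃, Ã₄ be elements of R such that for all 1 ≤ i, j ≤ 4: A_i − Ã_i ∈ I, [A_i, A_j] ∈ I, [Ã_i, Ã_j] ∈ I, and [A_i, A_j] − [Ã_i, Ã_j] ∈ J, where [x,y] = xy − yx. Then [A₁A₂, A₃A₄] − [Ã₁Ã₂, Ã₃Ã₄] ∈ J. -/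
/-!
Expand `⁅ab, cd⁆ = a⁅b,c⁆d + ac⁅b,d⁆ + ⁅a,c⁆db + c⁅a,d⁆b`, for the `A`'s and the `Ã`'s alike.
Each term has one commutator factor, which lies in `I` and changes only by an element of `J`,
while the remaining factors change by elements of `I`; telescoping, every change is either
an element of `J` times ring elements or a product of two elements of `I`, hence lies in `J`.
-/

theorem Ring.lie_mul_mul {R : Type*} [Ring R] (a b c d : R) :
    ⁅a * b, c * d⁆ = a * ⁅b, c⁆ * d + a * c * ⁅b, d⁆ + ⁅a, c⁆ * (d * b) + c * ⁅a, d⁆ * b := by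
  simp only [Ring.lie_def]
  noncomm_ring

namespace TwoSidedIdeal

variable {R : Type*} [Ring R] {I J : TwoSidedIdeal R} {a a' b b' c c' : R}

theorem mul_sub_mul_mem (ha : a - a' ∈ I) (hb : b - b' ∈ I) : a * b - a' * b' ∈ I := by
  rw [show a * b - a' * b' = (a - a') * b + a' * (b - b') by noncomm_ring]
  exact I.add_mem (I.mul_mem_right _ _ ha) (I.mul_mem_left _ _ hb)

variable (hIJ : ∀ x ∈ I, ∀ y ∈ I, x * y ∈ J)
include hIJ

theorem mul_sub_mul_mem_of_right_mem (ha : a - a' ∈ I) (hb : b ∈ I) (hbb' : b - b' ∈ J) :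
    a * b - a' * b' ∈ J := by
  rw [show a * b - a' * b' = (a - a') * b + a' * (b - b') by noncomm_ring]
  exact J.add_mem (hIJ _ ha _ hb) (J.mul_mem_left _ _ hbb')

theorem mul_sub_mul_mem_of_left_mem (haa' : a - a' ∈ J) (ha' : a' ∈ I) (hb : b - b' ∈ I) :
    a * b - a' * b' ∈ J := by
  rw [show a * b - a' * b' = (a - a') * b + a' * (b - b') by noncomm_ring]
  exact J.add_mem (J.mul_mem_right _ _ haa') (hIJ _ ha' _ hb)

theorem mul_mul_sub_mul_mul_mem (ha : a - a' ∈ I) (hb : b ∈ I) (hb' : b' ∈ I)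
    (hbb' : b - b' ∈ J) (hc : c - c' ∈ I) : a * b * c - a' * b' * c' ∈ J :=
  mul_sub_mul_mem_of_left_mem hIJ (mul_sub_mul_mem_of_right_mem hIJ ha hb hbb')
    (I.mul_mem_left _ _ hb') hc

end TwoSidedIdeal

open TwoSidedIdeal in
/-- Let `I, J` be two-sided ideals of a ring `R` with `I·I ⊆ J`. If
`A_i − Ã_i ∈ I`, `[A_i, A_j] ∈ I`, `[Ã_i, Ã_j] ∈ I` and `[A_i, A_j] − [Ã_i, Ã_j] ∈ J`
for all `i, j`, then `[A₁A₂, A₃A₄] − [Ã₁Ã₂, Ã₃Ã₄] ∈ J`. -/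
theorem commutator_product_mem
    (R : Type*) [Ring R] (I J : TwoSidedIdeal R)
    (hIJ : ∀ x ∈ I, ∀ y ∈ I, x * y ∈ J)
    (A tA : Fin 4 → R)
    (hdiff : ∀ i, A i - tA i ∈ I)
    (hcommA : ∀ i j, A i * A j - A j * A i ∈ I)
    (hcommtA : ∀ i j, tA i * tA j - tA j * tA i ∈ I)
    (hcommJ : ∀ i j, (A i * A j - A j * A i) - (tA i * tA j - tA j * tA i) ∈ J) :
    ((A 0 * A 1) * (A 2 * A 3) - (A 2 * A 3) * (A 0 * A 1)) -
      ((tA 0 * tA 1) * (tA 2 * tA 3) - (tA 2 * tA 3) * (tA 0 * tA 1)) ∈ J := by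
  change ⁅A 0 * A 1, A 2 * A 3⁆ - ⁅tA 0 * tA 1, tA 2 * tA 3⁆ ∈ J
  rw [Ring.lie_mul_mul, Ring.lie_mul_mul]
  simp only [add_sub_add_comm]
  refine J.add_mem (J.add_mem (J.add_mem ?_ ?_) ?_) ?_
  · exact mul_mul_sub_mul_mul_mem hIJ (hdiff 0) (hcommA 1 2) (hcommtA 1 2) (hcommJ 1 2) (hdiff 3)
  · exact mul_sub_mul_mem_of_right_mem hIJ (mul_sub_mul_mem (hdiff 0) (hdiff 2)) (hcommA 1 3)
      (hcommJ 1 3)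
  · exact mul_sub_mul_mem_of_left_mem hIJ (hcommJ 0 2) (hcommtA 0 2)
      (mul_sub_mul_mem (hdiff 3) (hdiff 1))
  · exact mul_mul_sub_mul_mul_mem hIJ (hdiff 2) (hcommA 0 3) (hcommtA 0 3) (hcommJ 0 3) (hdiff 1)
end
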